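/- Let 0<r<1 and suppose 0 ≤ x ≤ z ≤ 2^{-r}. Then for every real y with y > z^{1/r}, one has (y - x^{1/r})^r - (y - z^{1/r})^r ≤ 2^{r-1} (y - z^{1/r})^{r-1} (z-x). -/

import Mathlib

/-!
Put `a = x^{1/r}` and `b = z^{1/r}`, so that `a ≤ b ≤ 1/2`. Concavity of `t ↦ t^r` gives the
tangent-line bound `v^r ≤ u^r + r u^{r-1} (v - u)`. At `u = y - b`, `v = y - a` it bounds the
left-hand side by `r (y - b)^{r-1} (b - a)`; at `u = b`, `v = a` it gives
`r (b - a) ≤ b^{1-r} (z - x)`, and `b^{1-r} ≤ 2^{r-1}` because `b ≤ 1/2`.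
-/

open Real

lemma rpow_le_rpow_add_mul_sub {r u v : ℝ} (hu : 0 < u) (hv : 0 ≤ v) (hr0 : 0 ≤ r)
    (hr1 : r ≤ 1) : v ^ r ≤ u ^ r + r * u ^ (r - 1) * (v - u) := by
  have hbernoulli := rpow_one_add_le_one_add_mul_self (s := v / u - 1)
    (by linarith [div_nonneg hv hu.le]) hr0 hr1
  rw [add_sub_cancel, div_rpow hv hu.le, div_le_iff₀ (rpow_pos_of_pos hu r)] at hbernoulli
  calc v ^ r ≤ (1 + r * (v / u - 1)) * u ^ r := hbernoulli
    _ = u ^ r + r * (u ^ r / u) * (v - u) := by field_simp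
    _ = u ^ r + r * u ^ (r - 1) * (v - u) := by rw [rpow_sub_one hu.ne']

lemma mul_sub_le_rpow_mul_rpow_sub_rpow {r a b : ℝ} (ha : 0 ≤ a) (hab : a ≤ b) (hr0 : 0 ≤ r)
    (hr1 : r ≤ 1) : r * (b - a) ≤ b ^ (1 - r) * (b ^ r - a ^ r) := by
  rcases (ha.trans hab).eq_or_lt with hb | hb
  · obtain rfl : a = 0 := le_antisymm (hb ▸ hab) ha
    simp [← hb]
  have htangent := rpow_le_rpow_add_mul_sub hb ha hr0 hr1
  have hcancel : b ^ (1 - r) * b ^ (r - 1) = 1 := by rw [← rpow_add hb]; simp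
  calc r * (b - a) = b ^ (1 - r) * (r * b ^ (r - 1) * (b - a)) := by
        linear_combination (r * (b - a)) * hcancel.symm
    _ ≤ b ^ (1 - r) * (b ^ r - a ^ r) :=
        mul_le_mul_of_nonneg_left (by linarith) (rpow_nonneg hb.le _)

theorem stmt4 (r x z y : ℝ) (hr0 : 0 < r) (hr1 : r < 1)
    (hx : 0 ≤ x) (hxz : x ≤ z) (hz : z ≤ (2 : ℝ) ^ (-r))
    (hy : z ^ (1 / r) < y) :
    (y - x ^ (1 / r)) ^ r - (y - z ^ (1 / r)) ^ r ≤
      2 ^ (r - 1) * (y - z ^ (1 / r)) ^ (r - 1) * (z - x) := by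
  have hz0 : 0 ≤ z := hx.trans hxz
  rw [one_div] at hy ⊢
  set a := x ^ r⁻¹
  set b := z ^ r⁻¹
  have hab : a ≤ b := rpow_le_rpow hx hxz (by positivity)
  have hb_half : b ≤ 1 / 2 := by
    rwa [rpow_inv_le_iff_of_pos hz0 (by norm_num) hr0, one_div, inv_rpow zero_le_two,
      ← rpow_neg zero_le_two]
  have hconcave : (y - a) ^ r - (y - b) ^ r ≤ r * (y - b) ^ (r - 1) * (b - a) := by
    have := rpow_le_rpow_add_mul_sub (sub_pos.2 hy) (by linarith) hr0.le hr1.le (v := y - a)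
    linarith
  have hroot : r * (b - a) ≤ 2 ^ (r - 1) * (z - x) := calc
    r * (b - a) ≤ b ^ (1 - r) * (z - x) := by
      simpa [a, b, rpow_inv_rpow, hx, hz0, hr0.ne'] using
        mul_sub_le_rpow_mul_rpow_sub_rpow (rpow_nonneg hx _) hab hr0.le hr1.le
    _ ≤ (1 / 2) ^ (1 - r) * (z - x) := by gcongr
    _ = 2 ^ (r - 1) * (z - x) := by
      rw [one_div, inv_rpow zero_le_two, ← rpow_neg zero_le_two, neg_sub]
  calc (y - a) ^ r - (y - b) ^ r ≤ (y - b) ^ (r - 1) * (r * (b - a)) := by linarith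
    _ ≤ (y - b) ^ (r - 1) * (2 ^ (r - 1) * (z - x)) := by gcongr
    _ = 2 ^ (r - 1) * (y - b) ^ (r - 1) * (z - x) := by ring
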